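/- arXiv:1805.01405 — 3 statements merged into one kernel-verified Lean document; each statement's English description precedes it below -/
import Mathlib

section
/- Let n ≥ 1, let ξ ∈ ℝⁿ, let α ∈ ℝ, and let h be a symmetric real n×n matrix. Then ⟨σ_{α,ξ}(h), h⟩_F = ‖ξ‖²‖h‖_F² + 2α‖hξ‖², and if moreover α > −1/2 then ⟨σ_{α,ξ}(h), h⟩_F ≥ min(1, 1+2α)·‖ξ‖²·‖h‖_F². -/
open Matrix

/-- The principal symbol (up to overall sign) of the operator `L_{g,γ,α}` from the
modified spatial harmonic gauge: `σ_{α,ξ}(h) = ‖ξ‖²·h + α·(ξ(hξ)ᵀ + (hξ)ξᵀ)`. -/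
noncomputable def sigmaSymb {n : ℕ} (α : ℝ) (ξ : Fin n → ℝ)
    (h : Matrix (Fin n) (Fin n) ℝ) : Matrix (Fin n) (Fin n) ℝ :=
  (ξ ⬝ᵥ ξ) • h + α • (vecMulVec ξ (h.mulVec ξ) + vecMulVec (h.mulVec ξ) ξ)

/-- The Frobenius inner product `⟨A,B⟩_F = tr(AᵀB)`. -/
noncomputable def frob {n : ℕ} (A B : Matrix (Fin n) (Fin n) ℝ) : ℝ := (Aᵀ * B).trace

lemma aux_trace1 {n : ℕ} (ξ : Fin n → ℝ) (h : Matrix (Fin n) (Fin n) ℝ) (hsym : h.IsSymm) :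
    ((vecMulVec ξ (h.mulVec ξ))ᵀ * h).trace = (h.mulVec ξ) ⬝ᵥ (h.mulVec ξ) := by
  simp only [Matrix.trace, Matrix.diag, Matrix.mul_apply, Matrix.transpose_apply,
    Matrix.vecMulVec_apply, Matrix.mulVec, dotProduct]
  refine Finset.sum_congr rfl fun x _ => ?_
  calc ∑ i, (ξ i * ∑ k, h x k * ξ k) * h i x
      = (∑ k, h x k * ξ k) * ∑ i, h x i * ξ i := by
        rw [Finset.mul_sum]
        exact Finset.sum_congr rfl fun i _ => by rw [hsym.apply]; ring
    _ = _ := rfl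

lemma aux_trace_symm {n : ℕ} (A h : Matrix (Fin n) (Fin n) ℝ) (hsym : h.IsSymm) :
    ((Aᵀ) * h).trace = (A * h).trace := by
  conv_rhs => rw [← Matrix.trace_transpose, Matrix.transpose_mul, hsym.eq,
    Matrix.trace_mul_comm]

lemma aux_trace2 {n : ℕ} (ξ : Fin n → ℝ) (h : Matrix (Fin n) (Fin n) ℝ) (hsym : h.IsSymm) :
    ((vecMulVec (h.mulVec ξ) ξ)ᵀ * h).trace = (h.mulVec ξ) ⬝ᵥ (h.mulVec ξ) := by
  have ht : (vecMulVec (h.mulVec ξ) ξ)ᵀ = vecMulVec ξ (h.mulVec ξ) := by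
    ext i j; simp [Matrix.vecMulVec_apply, mul_comm]
  rw [ht, ← aux_trace_symm (vecMulVec ξ (h.mulVec ξ)) h hsym, aux_trace1 ξ h hsym]

lemma frob_self_eq {n : ℕ} (h : Matrix (Fin n) (Fin n) ℝ) :
    frob h h = ∑ i, ∑ j, h j i ^ 2 := by
  simp only [frob, Matrix.trace, Matrix.diag, Matrix.mul_apply, Matrix.transpose_apply, sq]

theorem stmt0 (n : ℕ) (hn : 1 ≤ n) (ξ : Fin n → ℝ) (α : ℝ)
    (h : Matrix (Fin n) (Fin n) ℝ) (hsym : h.IsSymm) :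
    frob (sigmaSymb α ξ h) h
      = (ξ ⬝ᵥ ξ) * frob h h + 2 * α * ((h.mulVec ξ) ⬝ᵥ (h.mulVec ξ)) ∧
    (α > -(1/2) →
      frob (sigmaSymb α ξ h) h ≥ min 1 (1 + 2 * α) * ((ξ ⬝ᵥ ξ) * frob h h)) := by
  have key : frob (sigmaSymb α ξ h) h
      = (ξ ⬝ᵥ ξ) * frob h h + 2 * α * ((h.mulVec ξ) ⬝ᵥ (h.mulVec ξ)) := by
    simp only [frob, sigmaSymb, Matrix.transpose_add, Matrix.transpose_smul, Matrix.add_mul,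
      Matrix.smul_mul, Matrix.trace_add, Matrix.trace_smul, smul_eq_mul,
      aux_trace1 ξ h hsym, aux_trace2 ξ h hsym]
    ring
  refine ⟨key, fun hα => ?_⟩
  rw [key]
  -- basic nonnegativity facts
  have hq : (0:ℝ) ≤ ξ ⬝ᵥ ξ := by
    simp only [dotProduct]; exact Finset.sum_nonneg fun i _ => mul_self_nonneg _
  have hF : (0:ℝ) ≤ frob h h := by
    rw [frob_self_eq]
    exact Finset.sum_nonneg fun i _ => Finset.sum_nonneg fun j _ => sq_nonneg _
  have hhx : (0:ℝ) ≤ (h.mulVec ξ) ⬝ᵥ (h.mulVec ξ) := by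
    simp only [dotProduct]; exact Finset.sum_nonneg fun i _ => mul_self_nonneg _
  -- Cauchy–Schwarz: ‖hξ‖² ≤ ‖ξ‖² ‖h‖_F²
  have hCS : (h.mulVec ξ) ⬝ᵥ (h.mulVec ξ) ≤ (ξ ⬝ᵥ ξ) * frob h h := by
    rw [frob_self_eq]
    simp only [dotProduct, Matrix.mulVec, dotProduct]
    calc ∑ i, (∑ j, h i j * ξ j) * (∑ j, h i j * ξ j)
        ≤ ∑ i, (∑ j, h i j ^ 2) * (∑ j, ξ j ^ 2) := by
          refine Finset.sum_le_sum fun i _ => ?_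
          rw [← sq]
          exact Finset.sum_mul_sq_le_sq_mul_sq _ _ _
      _ = (∑ j, ξ j * ξ j) * ∑ i, ∑ j, h i j ^ 2 := by
          rw [← Finset.sum_mul, mul_comm]
          congr 1
          exact Finset.sum_congr rfl fun j _ => sq (ξ j) ▸ rfl
      _ = (∑ j, ξ j * ξ j) * ∑ i, ∑ j, h j i ^ 2 := by rw [Finset.sum_comm]
  rcases le_or_gt 0 α with hα0 | hα0
  · have : min 1 (1 + 2*α) = 1 := min_eq_left (by linarith)
    rw [this, one_mul]
    nlinarith
  · have : min 1 (1 + 2*α) = 1 + 2*α := min_eq_right (by linarith)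
    rw [this]
    nlinarith
end

section
/- Let n ≥ 1, let ξ ∈ ℝⁿ with ξ ≠ 0, and let α > −1/2. Then the linear map σ_{α,ξ} maps the subspace of symmetric real n×n matrices to itself and restricts to a linear bijection of that subspace. -/
open Matrix

/-
Since `σ(h) ξ = (1 + α)‖ξ‖² hξ + α ⟨hξ, ξ⟩ ξ`, pairing with `ξ` gives
`⟨ξ, σ(h) ξ⟩ = (1 + 2α)‖ξ‖² ⟨ξ, hξ⟩`. So if `σ(h) = 0` and `α ∉ {-1, -1/2}`, first `⟨ξ, hξ⟩ = 0`,
then `hξ = 0`, and finally `‖ξ‖² h = 0`. An injective linear endomorphism of the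
finite-dimensional space of symmetric matrices is bijective.
-/

namespace Matrix

def symmetricSubmodule (R ι : Type*) [CommSemiring R] : Submodule R (Matrix ι ι R) where
  carrier := {h | h.IsSymm}
  add_mem' := IsSymm.add
  zero_mem' := isSymm_zero
  smul_mem' r _ hh := hh.smul r

end Matrix

section sigmaSymb

variable {n : ℕ} (α : ℝ) (ξ : Fin n → ℝ)

noncomputable def sigmaSymbLinearMap :
    Matrix (Fin n) (Fin n) ℝ →ₗ[ℝ] Matrix (Fin n) (Fin n) ℝ where
  toFun := sigmaSymb α ξ
  map_add' a b := by
    simp only [sigmaSymb, add_mulVec, vecMulVec_add, add_vecMulVec]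
    module
  map_smul' r a := by
    simp only [sigmaSymb, smul_mulVec, vecMulVec_smul, smul_vecMulVec, RingHom.id_apply]
    module

theorem sigmaSymb_isSymm {h : Matrix (Fin n) (Fin n) ℝ} (hh : h.IsSymm) :
    (sigmaSymb α ξ h).IsSymm := by
  simp only [IsSymm, sigmaSymb, transpose_add, transpose_smul, transpose_vecMulVec, hh.eq]
  rw [add_comm (vecMulVec (h *ᵥ ξ) ξ)]

theorem sigmaSymb_mulVec (h : Matrix (Fin n) (Fin n) ℝ) :
    sigmaSymb α ξ h *ᵥ ξ = ((1 + α) * (ξ ⬝ᵥ ξ)) • (h *ᵥ ξ) + (α * (h *ᵥ ξ ⬝ᵥ ξ)) • ξ := by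
  simp only [sigmaSymb, add_mulVec, smul_mulVec, vecMulVec_mulVec, op_smul_eq_smul]
  module

theorem dotProduct_sigmaSymb_mulVec (h : Matrix (Fin n) (Fin n) ℝ) :
    ξ ⬝ᵥ (sigmaSymb α ξ h *ᵥ ξ) = (1 + 2 * α) * (ξ ⬝ᵥ ξ) * (ξ ⬝ᵥ h *ᵥ ξ) := by
  rw [sigmaSymb_mulVec, dotProduct_add, dotProduct_smul, dotProduct_smul,
    dotProduct_comm (h *ᵥ ξ) ξ]
  simp only [smul_eq_mul]
  ring

theorem sigmaSymb_injective (hξ : ξ ≠ 0) (hα₁ : 1 + α ≠ 0) (hα₂ : 1 + 2 * α ≠ 0) :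
    Function.Injective (sigmaSymb α ξ) := by
  refine (injective_iff_map_eq_zero (sigmaSymbLinearMap α ξ)).mpr fun h hσ => ?_
  change sigmaSymb α ξ h = 0 at hσ
  have hc : ξ ⬝ᵥ ξ ≠ 0 := fun hc => hξ (dotProduct_self_eq_zero.mp hc)
  have hpair : ξ ⬝ᵥ h *ᵥ ξ = 0 := by
    simpa [hσ, hα₂, hc] using (dotProduct_sigmaSymb_mulVec α ξ h).symm
  have hv : h *ᵥ ξ = 0 := by
    simpa [hσ, dotProduct_comm _ ξ, hpair, hα₁, hc] using (sigmaSymb_mulVec α ξ h).symm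
  simpa [sigmaSymb, hv, hc] using hσ

end sigmaSymb

theorem stmt1_general (n : ℕ) (ξ : Fin n → ℝ) (hξ : ξ ≠ 0) (α : ℝ)
    (hα : α > -(1/2)) :
    IsLinearMap ℝ (sigmaSymb α ξ) ∧
    (∀ h : Matrix (Fin n) (Fin n) ℝ, h.IsSymm → (sigmaSymb α ξ h).IsSymm) ∧
    Set.BijOn (sigmaSymb α ξ) {h | h.IsSymm} {h | h.IsSymm} := by
  have hmaps : ∀ h ∈ symmetricSubmodule ℝ (Fin n),
      sigmaSymbLinearMap α ξ h ∈ symmetricSubmodule ℝ (Fin n) :=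
    fun _ hh => sigmaSymb_isSymm α ξ hh
  have hinj : Set.InjOn (sigmaSymbLinearMap α ξ) (symmetricSubmodule ℝ (Fin n)) :=
    (sigmaSymb_injective α ξ hξ (by linarith) (by linarith)).injOn
  exact ⟨(sigmaSymbLinearMap α ξ).isLinear, fun _ => sigmaSymb_isSymm α ξ,
    hmaps, hinj, (LinearMap.injOn_iff_surjOn hmaps).mp hinj⟩

theorem stmt1 (n : ℕ) (hn : 1 ≤ n) (ξ : Fin n → ℝ) (hξ : ξ ≠ 0) (α : ℝ)
    (hα : α > -(1/2)) :
    IsLinearMap ℝ (sigmaSymb α ξ) ∧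
    (∀ h : Matrix (Fin n) (Fin n) ℝ, h.IsSymm → (sigmaSymb α ξ h).IsSymm) ∧
    Set.BijOn (sigmaSymb α ξ) {h | h.IsSymm} {h | h.IsSymm} :=
  stmt1_general n ξ hξ α hα
end

section
/- Let n ≥ 1, let ξ ∈ ℝⁿ, and let α ∈ ℝ. Then: (i) σ_{α,ξ}(ξξᵀ) = (1+2α)‖ξ‖²·(ξξᵀ); (ii) for every symmetric real n×n matrix h with hξ = 0 one has σ_{α,ξ}(h) = ‖ξ‖²·h; (iii) for every v ∈ ℝⁿ with ⟨v,ξ⟩ = 0 one has σ_{α,ξ}(ξvᵀ + vξᵀ) = (1+α)‖ξ‖²·(ξvᵀ + vξᵀ). In particular the symbol acts on symmetric matrices with the three eigenvalues ‖ξ‖², (1+α)‖ξ‖², (1+2α)‖ξ‖² on these respective subspaces. -/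
open Matrix

theorem vecMulVec_mulVec_eq_smul {m n R : Type*} [CommSemiring R] [Fintype n]
    (u : m → R) (v w : n → R) : vecMulVec u v *ᵥ w = (v ⬝ᵥ w) • u := by
  rw [vecMulVec_mulVec, op_smul_eq_smul]

section sigmaSymb

variable {n : ℕ} (α : ℝ) (ξ : Fin n → ℝ)

theorem sigmaSymb_vecMulVec_self :
    sigmaSymb α ξ (vecMulVec ξ ξ) = ((1 + 2 * α) * (ξ ⬝ᵥ ξ)) • vecMulVec ξ ξ := by
  rw [sigmaSymb, vecMulVec_mulVec_eq_smul, vecMulVec_smul, smul_vecMulVec]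
  module

theorem sigmaSymb_of_mulVec_eq_zero {h : Matrix (Fin n) (Fin n) ℝ} (hξ : h *ᵥ ξ = 0) :
    sigmaSymb α ξ h = (ξ ⬝ᵥ ξ) • h := by
  simp [sigmaSymb, hξ]

theorem sigmaSymb_vecMulVec_add_of_dotProduct_eq_zero {v : Fin n → ℝ} (hv : v ⬝ᵥ ξ = 0) :
    sigmaSymb α ξ (vecMulVec ξ v + vecMulVec v ξ)
      = ((1 + α) * (ξ ⬝ᵥ ξ)) • (vecMulVec ξ v + vecMulVec v ξ) := by
  have hmulVec : (vecMulVec ξ v + vecMulVec v ξ) *ᵥ ξ = (ξ ⬝ᵥ ξ) • v := by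
    rw [add_mulVec, vecMulVec_mulVec_eq_smul, vecMulVec_mulVec_eq_smul, hv, zero_smul, zero_add]
  rw [sigmaSymb, hmulVec, vecMulVec_smul, smul_vecMulVec]
  module

end sigmaSymb

theorem stmt3_general (n : ℕ) (ξ : Fin n → ℝ) (α : ℝ) :
    sigmaSymb α ξ (vecMulVec ξ ξ) = ((1 + 2 * α) * (ξ ⬝ᵥ ξ)) • vecMulVec ξ ξ ∧
    (∀ h : Matrix (Fin n) (Fin n) ℝ, h.IsSymm → h.mulVec ξ = 0 →
      sigmaSymb α ξ h = (ξ ⬝ᵥ ξ) • h) ∧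
    (∀ v : Fin n → ℝ, v ⬝ᵥ ξ = 0 →
      sigmaSymb α ξ (vecMulVec ξ v + vecMulVec v ξ)
        = ((1 + α) * (ξ ⬝ᵥ ξ)) • (vecMulVec ξ v + vecMulVec v ξ)) :=
  ⟨sigmaSymb_vecMulVec_self α ξ,
    fun _ _ hξ => sigmaSymb_of_mulVec_eq_zero α ξ hξ,
    fun _ hv => sigmaSymb_vecMulVec_add_of_dotProduct_eq_zero α ξ hv⟩

theorem stmt3 (n : ℕ) (hn : 1 ≤ n) (ξ : Fin n → ℝ) (α : ℝ) :
    sigmaSymb α ξ (vecMulVec ξ ξ) = ((1 + 2 * α) * (ξ ⬝ᵥ ξ)) • vecMulVec ξ ξ ∧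
    (∀ h : Matrix (Fin n) (Fin n) ℝ, h.IsSymm → h.mulVec ξ = 0 →
      sigmaSymb α ξ h = (ξ ⬝ᵥ ξ) • h) ∧
    (∀ v : Fin n → ℝ, v ⬝ᵥ ξ = 0 →
      sigmaSymb α ξ (vecMulVec ξ v + vecMulVec v ξ)
        = ((1 + α) * (ξ ⬝ᵥ ξ)) • (vecMulVec ξ v + vecMulVec v ξ)) :=
  stmt3_general n ξ α
end
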